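/- The canonical successor function S(Φ)=({φ : ○φ∈Φ⁺},{φ : ○φ∈Φ⁻}) maps complete types to complete types. -/

import Mathlib

/-- Formulas of the Gödel temporal language. -/
inductive GF where
  | var : Nat → GF
  | and : GF → GF → GF
  | or : GF → GF → GF
  | imp : GF → GF → GF
  | coimp : GF → GF → GF
  | next : GF → GF
  | dia : GF → GF
  | box : GF → GF
deriving DecidableEq

/-- ⊥ := p ⇐ p -/
def GF.bot : GF := .coimp (.var 0) (.var 0)
/-- ⊤ := p ⇒ p -/
def GF.top : GF := .imp (.var 0) (.var 0)
/-- ¬φ := φ ⇒ ⊥ -/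
def GF.neg (φ : GF) : GF := .imp φ .bot
/-- φ ⟺ ψ := (φ⇒ψ) ∧ (ψ⇒φ) -/
def GF.iffF (φ ψ : GF) : GF := .and (.imp φ ψ) (.imp ψ φ)

/-- The deductive calculus GTL. Intuitionistic tautologies are generated by a
standard Hilbert-style axiomatization of intuitionistic propositional logic. -/
inductive GTL : GF → Prop where
  -- intuitionistic axioms
  | i1 (φ ψ : GF) : GTL (.imp φ (.imp ψ φ))
  | i2 (φ ψ χ : GF) : GTL (.imp (.imp φ (.imp ψ χ)) (.imp (.imp φ ψ) (.imp φ χ)))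
  | i3 (φ ψ : GF) : GTL (.imp (.and φ ψ) φ)
  | i4 (φ ψ : GF) : GTL (.imp (.and φ ψ) ψ)
  | i5 (φ ψ : GF) : GTL (.imp φ (.imp ψ (.and φ ψ)))
  | i6 (φ ψ : GF) : GTL (.imp φ (.or φ ψ))
  | i7 (φ ψ : GF) : GTL (.imp ψ (.or φ ψ))
  | i8 (φ ψ χ : GF) : GTL (.imp (.imp φ χ) (.imp (.imp ψ χ) (.imp (.or φ ψ) χ)))
  | i9 (φ : GF) : GTL (.imp .bot φ)
  -- H-B axioms and rules
  | hb1 (φ ψ : GF) : GTL (.imp φ (.or ψ (.coimp φ ψ)))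
  | hbMon {φ ψ : GF} (θ : GF) : GTL (.imp φ ψ) → GTL (.imp (.coimp φ θ) (.coimp ψ θ))
  | hbDis {φ ψ γ : GF} : GTL (.imp φ (.or ψ γ)) → GTL (.imp (.coimp φ ψ) γ)
  -- linearity axioms
  | lin (φ ψ : GF) : GTL (.or (.imp φ ψ) (.imp ψ φ))
  | colin (φ ψ : GF) : GTL (GF.neg (.and (.coimp φ ψ) (.coimp ψ φ)))
  -- temporal axioms
  | nBot : GTL (GF.neg (.next .bot))
  | nOr (φ ψ : GF) : GTL (.imp (.next (.or φ ψ)) (.or (.next φ) (.next ψ)))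
  | nAnd (φ ψ : GF) : GTL (.imp (.and (.next φ) (.next ψ)) (.next (.and φ ψ)))
  | nImp (φ ψ : GF) : GTL (GF.iffF (.next (.imp φ ψ)) (.imp (.next φ) (.next ψ)))
  | kBox (φ ψ : GF) : GTL (.imp (.box (.imp φ ψ)) (.imp (.box φ) (.box ψ)))
  | kDia (φ ψ : GF) : GTL (.imp (.box (.imp φ ψ)) (.imp (.dia φ) (.dia ψ)))
  | boxFix (φ : GF) : GTL (.imp (.box φ) (.and φ (.next (.box φ))))
  | diaFix (φ : GF) : GTL (.imp (.or φ (.next (.dia φ))) (.dia φ))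
  | indBox (φ : GF) : GTL (.imp (.box (.imp φ (.next φ))) (.imp φ (.box φ)))
  | indDia (φ : GF) : GTL (.imp (.box (.imp (.next φ) φ)) (.imp (.dia φ) φ))
  -- back–up confluence axiom
  | backup (φ ψ : GF) : GTL (.imp (.next (.coimp φ ψ)) (.coimp (.next φ) (.next ψ)))
  -- standard modal rules
  | mp {φ ψ : GF} : GTL φ → GTL (.imp φ ψ) → GTL ψ
  | necN {φ : GF} : GTL φ → GTL (.next φ)
  | necBox {φ : GF} : GTL φ → GTL (.box φ)

/-- Finite conjunction (⋀∅ = ⊤). -/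
def GF.conj : List GF → GF := fun l => l.foldr .and .top
/-- Finite disjunction (⋁∅ = ⊥). -/
def GF.disj : List GF → GF := fun l => l.foldr .or .bot

/-- Gentzen-style consequence: Γ ⊢ Δ iff ⋀Γ' ⇒ ⋁Δ' ∈ GTL for some finite
Γ' ⊆ Γ, Δ' ⊆ Δ. -/
def GSeq (Γ Δ : Set GF) : Prop :=
  ∃ l m : List GF, (∀ φ ∈ l, φ ∈ Γ) ∧ (∀ φ ∈ m, φ ∈ Δ) ∧
    GTL (.imp (GF.conj l) (GF.disj m))

/-- A complete type: a consistent saturated pair. -/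
def CompleteType (P N : Set GF) : Prop :=
  ¬ GSeq P N ∧ ∀ φ : GF, φ ∈ P ∨ φ ∈ N

/-- The canonical order: Φ ≤ Ψ iff Φ⁻ ⊆ Ψ⁻ and Φ⁺ ⊇ Ψ⁺. -/
def TLe (Φ Ψ : Set GF × Set GF) : Prop := Φ.2 ⊆ Ψ.2 ∧ Ψ.1 ⊆ Φ.1

/-- The canonical successor: S(Φ) = (⊖Φ⁺, ⊖Φ⁻). -/
def TSucc (Φ : Set GF × Set GF) : Set GF × Set GF :=
  ({φ | GF.next φ ∈ Φ.1}, {φ | GF.next φ ∈ Φ.2})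

/-!
Since `○` distributes over finite conjunctions and (by `¬○⊥`) over finite disjunctions, and
is monotone by necessitation, a derivable sequent `⋀l ⇒ ⋁m` yields the derivable sequent
`⋀○l ⇒ ⋁○m`. Hence an inconsistency of `S(Φ)` lifts to one of `Φ`; saturation of `S(Φ)`
is saturation of `Φ` at the formulas `○φ`.
-/

namespace GTL

theorem mp_imp {φ ψ χ : GF} (h₁ : GTL (.imp φ (.imp ψ χ))) (h₂ : GTL (.imp φ ψ)) :
    GTL (.imp φ χ) :=
  mp h₂ (mp h₁ (i2 φ ψ χ))

theorem imp_self (φ : GF) : GTL (.imp φ φ) :=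
  mp_imp (i1 φ (.imp φ φ)) (i1 φ φ)

theorem imp_trans {φ ψ χ : GF} (h₁ : GTL (.imp φ ψ)) (h₂ : GTL (.imp ψ χ)) :
    GTL (.imp φ χ) :=
  mp_imp (mp h₂ (i1 (.imp ψ χ) φ)) h₁

theorem imp_and {φ ψ χ : GF} (h₁ : GTL (.imp φ ψ)) (h₂ : GTL (.imp φ χ)) :
    GTL (.imp φ (.and ψ χ)) :=
  mp_imp (imp_trans h₁ (i5 ψ χ)) h₂

theorem or_imp {φ ψ χ : GF} (h₁ : GTL (.imp φ χ)) (h₂ : GTL (.imp ψ χ)) :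
    GTL (.imp (.or φ ψ) χ) :=
  mp h₂ (mp h₁ (i8 φ ψ χ))

theorem next_imp_next {φ ψ : GF} (h : GTL (.imp φ ψ)) : GTL (.imp (.next φ) (.next ψ)) :=
  mp (necN h) (mp (nImp φ ψ) (i3 _ _))

theorem conj_map_next_imp (l : List GF) :
    GTL (.imp (GF.conj (l.map .next)) (.next (GF.conj l))) := by
  induction l with
  | nil => exact mp (necN (imp_self (.var 0))) (i1 _ _)
  | cons a l ih =>
    exact imp_trans (imp_and (i3 _ _) (imp_trans (i4 _ _) ih)) (nAnd a (GF.conj l))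

theorem next_disj_imp (m : List GF) :
    GTL (.imp (.next (GF.disj m)) (GF.disj (m.map .next))) := by
  induction m with
  | nil => exact nBot
  | cons a m ih => exact imp_trans (nOr a (GF.disj m)) (or_imp (i6 _ _) (imp_trans ih (i7 _ _)))

end GTL

theorem GSeq.of_next {Γ Δ : Set GF} (h : GSeq {φ | GF.next φ ∈ Γ} {φ | GF.next φ ∈ Δ}) :
    GSeq Γ Δ := by
  obtain ⟨l, m, hl, hm, hlm⟩ := h
  refine ⟨l.map .next, m.map .next, List.forall_mem_map.2 hl, List.forall_mem_map.2 hm, ?_⟩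
  exact GTL.imp_trans (GTL.conj_map_next_imp l)
    (GTL.imp_trans (GTL.next_imp_next hlm) (GTL.next_disj_imp m))

/-- The canonical successor maps complete types to complete types. -/
theorem stmt16 (P N : Set GF) (h : CompleteType P N) :
    CompleteType {φ : GF | GF.next φ ∈ P} {φ : GF | GF.next φ ∈ N} :=
  ⟨fun hS => h.1 hS.of_next, fun φ => h.2 (.next φ)⟩
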